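/- arXiv:1710.02501 — 5 statements merged into one kernel-verified Lean document; each statement's English description precedes it below -/
import Mathlib

section
/- Let r ≥ 2 and let (P,ℒ) be an r-uniform linear system with 2-packing number ν₂ satisfying ν₂ − 1 ≤ r and whose transversal number satisfies τ = ⌈ν₂/2⌉. Then (r+1)·τ ≤ |P| + |ℒ| (equivalently, τ ≤ (|P| + |ℒ|)/(r+1)). -/
/-!
Take any `k = ν₂ ≤ |L|` lines of `L` and let `U` be the set of points they cover. Since two lines meet in
at most one point, adding the lines one at a time shows `k * r ≤ |U| + (k choose 2)`. Hence
`2 (|P| + |L|) ≥ 2 (|U| + k) ≥ k (2r + 3 - k)`, and `k ≤ r + 1` makes this at least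
`(r + 1) (k + 1) ≥ 2 (r + 1) τ`.
-/

open Finset

/-- `(P, L)` is a linear system: lines are nonempty subsets of the point set `P`,
and any two distinct lines share at most one point. -/
def IsLinearSystem {α : Type*} [DecidableEq α] (P : Finset α) (L : Finset (Finset α)) : Prop :=
  (∀ l ∈ L, l.Nonempty) ∧ (∀ l ∈ L, l ⊆ P) ∧
    ∀ l ∈ L, ∀ l' ∈ L, l ≠ l' → (l ∩ l').card ≤ 1

/-- `T` is a transversal of the linear system `(P, L)`. -/
def IsTransversal {α : Type*} [DecidableEq α] (P : Finset α) (L : Finset (Finset α))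
    (T : Finset α) : Prop :=
  T ⊆ P ∧ ∀ l ∈ L, (T ∩ l).Nonempty

/-- The transversal number `τ` of `(P, L)`. -/
noncomputable def tau {α : Type*} [DecidableEq α] (P : Finset α) (L : Finset (Finset α)) : ℕ :=
  sInf {n | ∃ T : Finset α, IsTransversal P L T ∧ T.card = n}

/-- `R` is a 2-packing of `L`: no three distinct lines of `R` have a common point. -/
def Is2Packing {α : Type*} [DecidableEq α] (L R : Finset (Finset α)) : Prop :=
  R ⊆ L ∧ ∀ l₁ ∈ R, ∀ l₂ ∈ R, ∀ l₃ ∈ R,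
    l₁ ≠ l₂ → l₁ ≠ l₃ → l₂ ≠ l₃ → l₁ ∩ l₂ ∩ l₃ = ∅

/-- The 2-packing number `ν₂` of `(P, L)`. -/
noncomputable def nu2 {α : Type*} [DecidableEq α] (L : Finset (Finset α)) : ℕ :=
  sSup {n | ∃ R : Finset (Finset α), Is2Packing L R ∧ R.card = n}

/-- The degree of a point `p`: the number of lines containing `p`. -/
def degree {α : Type*} [DecidableEq α] (L : Finset (Finset α)) (p : α) : ℕ :=
  (L.filter fun l => p ∈ l).card

/-- The maximum degree `Δ` over all points of `P`. -/
def maxDegree {α : Type*} [DecidableEq α] (P : Finset α) (L : Finset (Finset α)) : ℕ :=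
  P.sup (degree L)

section

variable {α : Type*} [DecidableEq α]

lemma card_inter_biUnion_le (l : Finset α) (R : Finset (Finset α))
    (h : ∀ l' ∈ R, #(l ∩ l') ≤ 1) : #(l ∩ R.biUnion id) ≤ #R := by
  rw [inter_biUnion]
  calc #(R.biUnion fun l' => l ∩ id l') ≤ ∑ l' ∈ R, #(l ∩ l') := card_biUnion_le
    _ ≤ ∑ _l' ∈ R, 1 := sum_le_sum h
    _ = #R := by rw [sum_const, smul_eq_mul, mul_one]

theorem sum_card_le_card_biUnion_add_choose_two (R : Finset (Finset α))
    (h : ∀ l ∈ R, ∀ l' ∈ R, l ≠ l' → #(l ∩ l') ≤ 1) :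
    ∑ l ∈ R, #l ≤ #(R.biUnion id) + (#R).choose 2 := by
  induction R using Finset.induction_on with
  | empty => simp
  | insert l R hl ih =>
    have hR : ∀ l ∈ R, ∀ l' ∈ R, l ≠ l' → #(l ∩ l') ≤ 1 := fun a ha b hb =>
      h a (mem_insert_of_mem ha) b (mem_insert_of_mem hb)
    have hmeet : #(l ∩ R.biUnion id) ≤ #R := card_inter_biUnion_le l R fun l' hl' =>
      h l (mem_insert_self l R) l' (mem_insert_of_mem hl') (ne_of_mem_of_not_mem hl' hl).symm
    have hunion := card_union_add_card_inter l (R.biUnion id)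
    have hchoose : (#R + 1).choose 2 = #R + (#R).choose 2 := by
      rw [Nat.choose_succ_succ', Nat.choose_one_right]
    rw [sum_insert hl, biUnion_insert, card_insert_of_notMem hl, hchoose, id]
    have := ih hR
    omega

lemma nu2_le_card (L : Finset (Finset α)) : nu2 L ≤ #L :=
  csSup_le' <| by
    rintro _ ⟨R, hR, rfl⟩
    exact card_le_card hR.1

lemma succ_mul_ceil_half_le {k r u : ℕ} (hk : k ≤ r + 1) (h : k * r ≤ u + k.choose 2) :
    (r + 1) * ((k + 1) / 2) ≤ u + k := by
  rcases Nat.eq_zero_or_pos k with rfl | hk0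
  · simp
  have hchoose : 2 * k.choose 2 = k * (k - 1) := by
    rw [Nat.choose_two_right, Nat.mul_div_cancel' (Nat.even_mul_pred_self k).two_dvd]
  obtain ⟨j, rfl⟩ : ∃ j, k = j + 1 := ⟨k - 1, by omega⟩
  have hhalf : 2 * ((j + 1 + 1) / 2) ≤ j + 2 := by omega
  have hjr : j * j ≤ j * r := Nat.mul_le_mul_left j (by omega)
  simp only [Nat.add_sub_cancel] at hchoose
  nlinarith

end

theorem stmt4_general {α : Type*} [DecidableEq α] (P : Finset α) (L : Finset (Finset α))
    (r : ℕ) (hLS : IsLinearSystem P L)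
    (huniform : ∀ l ∈ L, l.card = r) (hν : nu2 L - 1 ≤ r)
    (hτ : tau P L = (nu2 L + 1) / 2) :
    (r + 1) * tau P L ≤ P.card + L.card := by
  obtain ⟨R, hRL, hRcard⟩ := exists_subset_card_eq (nu2_le_card L)
  have hcount : #R * r ≤ #(R.biUnion id) + (#R).choose 2 := by
    have := sum_card_le_card_biUnion_add_choose_two R fun l hl l' hl' =>
      hLS.2.2 l (hRL hl) l' (hRL hl')
    rwa [sum_congr rfl fun l hl => huniform l (hRL hl), sum_const, smul_eq_mul] at this
  have hcover : #(R.biUnion id) ≤ #P :=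
    card_le_card <| biUnion_subset.mpr fun l hl => hLS.2.1 l (hRL hl)
  rw [hτ, ← hRcard]
  calc (r + 1) * ((#R + 1) / 2) ≤ #(R.biUnion id) + #R := succ_mul_ceil_half_le (by omega) hcount
    _ ≤ #P + #L := add_le_add hcover (card_le_card hRL)

/-- In an `r`-uniform linear system (`r ≥ 2`) with `ν₂ - 1 ≤ r` and
`τ = ⌈ν₂/2⌉`, we have `(r+1)·τ ≤ |P| + |ℒ|`. -/
theorem stmt4 {α : Type*} [DecidableEq α] (P : Finset α) (L : Finset (Finset α))
    (r : ℕ) (hr : 2 ≤ r) (hLS : IsLinearSystem P L)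
    (huniform : ∀ l ∈ L, l.card = r) (hν : nu2 L - 1 ≤ r)
    (hτ : tau P L = (nu2 L + 1) / 2) :
    (r + 1) * tau P L ≤ P.card + L.card :=
  stmt4_general P L r hLS huniform hν hτ
end

section
/- Let r ≥ 2 and let (P,ℒ) be an r-uniform intersecting linear system with maximum degree Δ = 2. Then (r+1)·τ ≤ |P| + |ℒ| (equivalently, τ ≤ (|P| + |ℒ|)/(r+1)), where τ is the transversal number of (P,ℒ). -/
open Finset

/-!
Let `m = |ℒ|`. Pairing up the lines and covering each pair by a common point gives
`2τ ≤ m + 1`. As `Δ ≤ 2`, the other lines meet a fixed line in pairwise distinct points, so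
`m ≤ r + 1`. Counting incidences, `m r = ∑ deg p ≤ |P| + ∑ C(deg p, 2) ≤ |P| + C(m, 2)`, the last
step because two lines share at most one point. These three bounds combine to
`(r + 1) τ ≤ |P| + m`.
-/

lemma Nat.le_one_add_choose_two (n : ℕ) : n ≤ 1 + n.choose 2 := by
  cases n with
  | zero => simp
  | succ k => rw [Nat.choose_succ_succ, Nat.choose_one_right]; omega

section LinearSystem

variable {α : Type*} [DecidableEq α] {P : Finset α} {L L' : Finset (Finset α)} {T T' : Finset α}

lemma tau_le_card (hT : IsTransversal P L T) : tau P L ≤ T.card :=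
  Nat.sInf_le ⟨T, hT, rfl⟩

lemma isTransversal_empty : IsTransversal P ∅ ∅ :=
  ⟨empty_subset P, by simp⟩

lemma isTransversal_singleton {p : α} (hp : p ∈ P) (h : ∀ l ∈ L, p ∈ l) :
    IsTransversal P L {p} :=
  ⟨singleton_subset_iff.mpr hp, fun l hl => ⟨p, mem_inter.mpr ⟨mem_singleton_self p, h l hl⟩⟩⟩

lemma IsTransversal.union (hT : IsTransversal P L T) (hT' : IsTransversal P L' T') :
    IsTransversal P (L ∪ L') (T ∪ T') := by
  refine ⟨union_subset hT.1 hT'.1, fun l hl => ?_⟩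
  rcases mem_union.mp hl with hl | hl
  · exact (hT.2 l hl).mono (inter_subset_inter_right subset_union_left)
  · exact (hT'.2 l hl).mono (inter_subset_inter_right subset_union_right)

theorem exists_transversal_two_mul_card_le (hne : ∀ l ∈ L, l.Nonempty) (hsub : ∀ l ∈ L, l ⊆ P)
    (hint : ∀ l ∈ L, ∀ l' ∈ L, l ≠ l' → (l ∩ l').Nonempty) :
    ∃ T, IsTransversal P L T ∧ 2 * T.card ≤ L.card + 1 := by
  induction L using Finset.strongInduction with
  | H L ih =>
  by_cases hL : 1 < L.card
  · obtain ⟨l, hl, l', hl', hll'⟩ := one_lt_card.mp hL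
    obtain ⟨p, hp⟩ := hint l hl l' hl' hll'
    obtain ⟨hpl, hpl'⟩ := mem_inter.mp hp
    have hpair : {l, l'} ⊆ L := insert_subset hl (singleton_subset_iff.mpr hl')
    obtain ⟨T, hT, hTcard⟩ := ih (L \ {l, l'}) (sdiff_ssubset hpair (insert_nonempty _ _))
      (fun m hm => hne m (mem_sdiff.mp hm).1) (fun m hm => hsub m (mem_sdiff.mp hm).1)
      (fun m hm m' hm' => hint m (mem_sdiff.mp hm).1 m' (mem_sdiff.mp hm').1)
    have hp : IsTransversal P {l, l'} {p} :=
      isTransversal_singleton (hsub l hl hpl) (by simp [hpl, hpl'])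
    refine ⟨{p} ∪ T, union_sdiff_of_subset hpair ▸ hp.union hT, ?_⟩
    have hunion := card_union_le {p} T
    have hsplit := card_sdiff_add_card_eq_card hpair
    rw [card_singleton] at hunion
    rw [card_pair hll'] at hsplit
    omega
  · rcases L.eq_empty_or_nonempty with rfl | ⟨l, hl⟩
    · exact ⟨∅, isTransversal_empty, by simp⟩
    obtain rfl : L = {l} := eq_singleton_iff_unique_mem.mpr
      ⟨hl, fun m hm => card_le_one.mp (not_lt.mp hL) m hm l hl⟩
    obtain ⟨p, hp⟩ := hne l (mem_singleton_self l)
    exact ⟨{p}, isTransversal_singleton (hsub l (mem_singleton_self l) hp) (by simpa), by simp⟩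

theorem two_mul_tau_le (hne : ∀ l ∈ L, l.Nonempty) (hsub : ∀ l ∈ L, l ⊆ P)
    (hint : ∀ l ∈ L, ∀ l' ∈ L, l ≠ l' → (l ∩ l').Nonempty) :
    2 * tau P L ≤ L.card + 1 := by
  obtain ⟨T, hT, hTcard⟩ := exists_transversal_two_mul_card_le hne hsub hint
  have := tau_le_card hT
  omega

theorem card_le_of_degree_le {d : ℕ} {l₀ : Finset α} (hl₀ : l₀ ∈ L) (hsub : ∀ l ∈ L, l ⊆ P)
    (hint : ∀ l ∈ L, ∀ l' ∈ L, l ≠ l' → (l ∩ l').Nonempty)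
    (hdeg : ∀ p ∈ P, degree L p ≤ d) :
    L.card ≤ (d - 1) * l₀.card + 1 := by
  have hcover : L.erase l₀ ⊆ l₀.biUnion fun p => (L.filter fun l => p ∈ l).erase l₀ := by
    intro l hl
    obtain ⟨hne, hl⟩ := mem_erase.mp hl
    obtain ⟨p, hp⟩ := hint l₀ hl₀ l hl hne.symm
    obtain ⟨hp₀, hp⟩ := mem_inter.mp hp
    exact mem_biUnion.mpr ⟨p, hp₀, mem_erase.mpr ⟨hne, mem_filter.mpr ⟨hl, hp⟩⟩⟩
  have hfiber : ∀ p ∈ l₀, ((L.filter fun l => p ∈ l).erase l₀).card ≤ d - 1 := fun p hp => by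
    rw [card_erase_of_mem (mem_filter.mpr ⟨hl₀, hp⟩)]
    exact Nat.sub_le_sub_right (hdeg p (hsub l₀ hl₀ hp)) 1
  calc L.card = (L.erase l₀).card + 1 := (card_erase_add_one hl₀).symm
    _ ≤ l₀.card * (d - 1) + 1 :=
      Nat.add_le_add_right ((card_le_card hcover).trans (card_biUnion_le_card_mul _ _ _ hfiber)) 1
    _ = (d - 1) * l₀.card + 1 := by rw [mul_comm]

theorem sum_degree_eq_sum_card (hsub : ∀ l ∈ L, l ⊆ P) :
    ∑ p ∈ P, degree L p = ∑ l ∈ L, l.card := by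
  simp only [degree, card_filter]
  rw [sum_comm]
  refine sum_congr rfl fun l hl => ?_
  rw [← card_filter, filter_mem_eq_inter, inter_eq_right.mpr (hsub l hl)]

theorem sum_choose_degree_le (hlin : ∀ l ∈ L, ∀ l' ∈ L, l ≠ l' → (l ∩ l').card ≤ 1)
    (S : Finset α) :
    ∑ p ∈ S, (degree L p).choose 2 ≤ L.card.choose 2 := by
  have hdisj :
      (S : Set α).PairwiseDisjoint fun p => (L.filter fun l => p ∈ l).powersetCard 2 := by
    intro p _ q _ hpq
    refine disjoint_left.mpr fun s hsp hsq => hpq ?_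
    obtain ⟨hsp, hs2⟩ := mem_powersetCard.mp hsp
    obtain ⟨l, l', hll', rfl⟩ := card_eq_two.mp hs2
    have hsq := (mem_powersetCard.mp hsq).1
    simp only [insert_subset_iff, singleton_subset_iff, mem_filter] at hsp hsq
    exact card_le_one.mp (hlin l hsp.1.1 l' hsp.2.1 hll') p (mem_inter.mpr ⟨hsp.1.2, hsp.2.2⟩)
      q (mem_inter.mpr ⟨hsq.1.2, hsq.2.2⟩)
  calc ∑ p ∈ S, (degree L p).choose 2
      = (S.biUnion fun p => (L.filter fun l => p ∈ l).powersetCard 2).card := by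
        rw [card_biUnion hdisj]
        simp only [card_powersetCard, degree]
    _ ≤ (L.powersetCard 2).card :=
        card_le_card (biUnion_subset.mpr fun p _ => powersetCard_mono (filter_subset _ L))
    _ = L.card.choose 2 := card_powersetCard 2 L

theorem card_mul_le_card_add_choose_two {r : ℕ} (hsub : ∀ l ∈ L, l ⊆ P)
    (hlin : ∀ l ∈ L, ∀ l' ∈ L, l ≠ l' → (l ∩ l').card ≤ 1) (huniform : ∀ l ∈ L, l.card = r) :
    L.card * r ≤ P.card + L.card.choose 2 :=
  calc L.card * r = ∑ l ∈ L, l.card := by rw [sum_congr rfl huniform, sum_const, smul_eq_mul]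
    _ = ∑ p ∈ P, degree L p := (sum_degree_eq_sum_card hsub).symm
    _ ≤ ∑ p ∈ P, (1 + (degree L p).choose 2) :=
        sum_le_sum fun p _ => Nat.le_one_add_choose_two _
    _ = P.card + ∑ p ∈ P, (degree L p).choose 2 := by rw [sum_add_distrib, card_eq_sum_ones]
    _ ≤ P.card + L.card.choose 2 := Nat.add_le_add_left (sum_choose_degree_le hlin P) _

end LinearSystem

/-- Writing `m = k + 1`, the inequality comes down to `k * k ≤ k * r`. -/
lemma Nat.succ_mul_le_add_of_le_add_choose_two {r m t n : ℕ} (ht : 2 * t ≤ m + 1)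
    (hm : m ≤ r + 1) (hn : m * r ≤ n + m.choose 2) : (r + 1) * t ≤ n + m := by
  obtain _ | k := m
  · obtain rfl : t = 0 := by omega
    simp
  have hchoose : 2 * (k + 1).choose 2 = (k + 1) * k := by
    rw [Nat.choose_two_right, Nat.add_sub_cancel, mul_comm (k + 1),
      Nat.mul_div_cancel' (Nat.even_mul_succ_self k).two_dvd]
  have hk : k * k ≤ k * r := Nat.mul_le_mul_left k (by omega)
  nlinarith

theorem stmt5_general {α : Type*} [DecidableEq α] (P : Finset α) (L : Finset (Finset α))
    (r : ℕ) (hLS : IsLinearSystem P L)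
    (huniform : ∀ l ∈ L, l.card = r)
    (hint : ∀ l ∈ L, ∀ l' ∈ L, l ≠ l' → (l ∩ l').card = 1)
    (hΔ : maxDegree P L = 2) :
    (r + 1) * tau P L ≤ P.card + L.card := by
  obtain ⟨hne, hsub, hlin⟩ := hLS
  have hmeet : ∀ l ∈ L, ∀ l' ∈ L, l ≠ l' → (l ∩ l').Nonempty := fun l hl l' hl' h =>
    card_pos.mp (by rw [hint l hl l' hl' h]; exact one_pos)
  have hdeg : ∀ p ∈ P, degree L p ≤ 2 := fun p hp => hΔ ▸ le_sup hp
  have hcard : L.card ≤ r + 1 := by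
    rcases L.eq_empty_or_nonempty with rfl | ⟨l₀, hl₀⟩
    · simp
    simpa [huniform l₀ hl₀] using card_le_of_degree_le hl₀ hsub hmeet hdeg
  exact Nat.succ_mul_le_add_of_le_add_choose_two (two_mul_tau_le hne hsub hmeet) hcard
    (card_mul_le_card_add_choose_two hsub hlin huniform)

/-- In an `r`-uniform intersecting linear system (`r ≥ 2`) with `Δ = 2`,
`(r+1)·τ ≤ |P| + |ℒ|`. -/
theorem stmt5 {α : Type*} [DecidableEq α] (P : Finset α) (L : Finset (Finset α))
    (r : ℕ) (hr : 2 ≤ r) (hLS : IsLinearSystem P L)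
    (huniform : ∀ l ∈ L, l.card = r)
    (hint : ∀ l ∈ L, ∀ l' ∈ L, l ≠ l' → (l ∩ l').card = 1)
    (hΔ : maxDegree P L = 2) :
    (r + 1) * tau P L ≤ P.card + L.card :=
  stmt5_general P L r hLS huniform hint hΔ
end

section
/- Let r ≥ 2 and let (P,ℒ) be an r-uniform linear system with at least one line and with maximum degree Δ satisfying Δ ≥ ν₂ − 1, where ν₂ is the 2-packing number. Then (ν₂ − 1)·(r+1) ≤ |P| + |ℒ| (equivalently, ν₂ − 1 ≤ (|P| + |ℒ|)/(r+1)). -/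
open Finset

/-! Pick a point `p` of maximum degree `d ≥ ν₂ - 1`. The `d` lines through `p` are pairwise
disjoint away from `p`, so `|P| ≥ 1 + d (r - 1)`. A maximum 2-packing has at most two lines
through `p`, so at least `ν₂ - 2` of its lines are not among those `d`, and `|ℒ| ≥ d + ν₂ - 2`.
Adding the two bounds gives `|P| + |ℒ| ≥ (ν₂ - 1)(r + 1)`. -/

section LinearSystem

variable {α : Type*} [DecidableEq α] {P : Finset α} {L : Finset (Finset α)}

theorem exists_is2Packing_card_eq_nu2 (L : Finset (Finset α)) :
    ∃ R, Is2Packing L R ∧ R.card = nu2 L := by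
  have hbdd : BddAbove {n | ∃ R : Finset (Finset α), Is2Packing L R ∧ R.card = n} :=
    ⟨L.card, fun _ ⟨R, hR, hn⟩ => hn ▸ card_le_card hR.1⟩
  refine Nat.sSup_mem ?_ hbdd
  exact ⟨0, ∅, ⟨empty_subset _, by simp⟩, card_empty⟩

theorem IsLinearSystem.disjoint_erase_of_mem (hLS : IsLinearSystem P L) {p : α}
    {l l' : Finset α} (hl : l ∈ L) (hl' : l' ∈ L) (hne : l ≠ l') (hpl : p ∈ l)
    (hpl' : p ∈ l') : Disjoint (l.erase p) (l'.erase p) := by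
  rw [disjoint_left]
  intro x hx hx'
  have hsub := card_le_one.mp (hLS.2.2 l hl l' hl' hne)
  exact ne_of_mem_erase hx <| hsub x (mem_inter.mpr ⟨mem_of_mem_erase hx, mem_of_mem_erase hx'⟩)
    p (mem_inter.mpr ⟨hpl, hpl'⟩)

theorem IsLinearSystem.degree_mul_add_one_le (hLS : IsLinearSystem P L) {r : ℕ}
    (huniform : ∀ l ∈ L, l.card = r) {p : α} (hp : p ∈ P) :
    degree L p * r + 1 ≤ P.card + degree L p := by
  set Lp := L.filter fun l => p ∈ l
  have hLp : Lp.card = degree L p := rfl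
  set S := Lp.biUnion (·.erase p)
  have hS : S.card = ∑ l ∈ Lp, (l.erase p).card := by
    refine card_biUnion fun l hl l' hl' hne => ?_
    rw [mem_coe, mem_filter] at hl hl'
    exact hLS.disjoint_erase_of_mem hl.1 hl'.1 hne hl.2 hl'.2
  have hpS : p ∉ S := by simp [S]
  have hSP : insert p S ⊆ P := by
    refine insert_subset hp fun x hx => ?_
    obtain ⟨l, hl, hxl⟩ := mem_biUnion.mp hx
    exact hLS.2.1 l (mem_filter.mp hl).1 (mem_of_mem_erase hxl)
  calc degree L p * r + 1 = ∑ l ∈ Lp, ((l.erase p).card + 1) + 1 := by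
        rw [sum_congr rfl fun l hl => card_erase_add_one (mem_filter.mp hl).2,
          sum_congr rfl fun l hl => huniform l (mem_filter.mp hl).1, sum_const, smul_eq_mul]
        rfl
    _ = (insert p S).card + degree L p := by
        rw [sum_add_distrib, card_insert_of_notMem hpS, hS, sum_const, smul_eq_mul, mul_one, hLp]
        omega
    _ ≤ P.card + degree L p := Nat.add_le_add_right (card_le_card hSP) _

theorem Is2Packing.card_filter_mem_le_two {R : Finset (Finset α)} (hR : Is2Packing L R)
    (p : α) : (R.filter (p ∈ ·)).card ≤ 2 := by
  by_contra! h
  obtain ⟨a, ha, b, hb, c, hc, hab, hac, hbc⟩ := two_lt_card.mp h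
  rw [mem_filter] at ha hb hc
  have hp : p ∈ a ∩ b ∩ c := by simp [ha.2, hb.2, hc.2]
  simp [hR.2 a ha.1 b hb.1 c hc.1 hab hac hbc] at hp

theorem Is2Packing.card_add_degree_le {R : Finset (Finset α)} (hR : Is2Packing L R) (p : α) :
    R.card + degree L p ≤ L.card + 2 := by
  have hsplit := card_filter_add_card_filter_not (s := R) (p := (p ∈ ·))
  have hdisj : Disjoint (R.filter (p ∉ ·)) (L.filter (p ∈ ·)) :=
    disjoint_left.mpr fun _ hl hl' => (mem_filter.mp hl).2 (mem_filter.mp hl').2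
  have hsub : R.filter (p ∉ ·) ∪ L.filter (p ∈ ·) ⊆ L :=
    union_subset ((filter_subset _ _).trans hR.1) (filter_subset _ _)
  have hL := card_le_card hsub
  rw [card_union_of_disjoint hdisj] at hL
  have hthrough := hR.card_filter_mem_le_two p
  unfold degree
  omega

end LinearSystem

theorem stmt6_general {α : Type*} [DecidableEq α] (P : Finset α) (L : Finset (Finset α))
    (r : ℕ) (hLS : IsLinearSystem P L)
    (huniform : ∀ l ∈ L, l.card = r)
    (hΔ : nu2 L - 1 ≤ maxDegree P L) :
    (nu2 L - 1) * (r + 1) ≤ P.card + L.card := by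
  rcases Nat.lt_or_ge (nu2 L) 2 with hν | hν
  · simp [Nat.sub_eq_zero_of_le (Nat.le_of_lt_succ hν)]
  obtain ⟨p, hp, hdeg⟩ := (Finset.le_sup_iff (by rw [Nat.bot_eq_zero]; omega)).mp hΔ
  obtain ⟨R, hR, hRcard⟩ := exists_is2Packing_card_eq_nu2 L
  have hpoints := hLS.degree_mul_add_one_le huniform hp
  have hlines := hR.card_add_degree_le p
  have hmul := Nat.mul_le_mul_right r hdeg
  rw [Nat.mul_add, mul_one]
  omega

/-- In an `r`-uniform linear system (`r ≥ 2`) with at least one line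
and `Δ ≥ ν₂ - 1`, we have `(ν₂ - 1)·(r+1) ≤ |P| + |ℒ|`. -/
theorem stmt6 {α : Type*} [DecidableEq α] (P : Finset α) (L : Finset (Finset α))
    (r : ℕ) (hr : 2 ≤ r) (hLS : IsLinearSystem P L)
    (huniform : ∀ l ∈ L, l.card = r) (hL : L.Nonempty)
    (hΔ : nu2 L - 1 ≤ maxDegree P L) :
    (nu2 L - 1) * (r + 1) ≤ P.card + L.card :=
  stmt6_general P L r hLS huniform hΔ
end

section
/- Let r ≥ 2 and let (P,ℒ) be an r-uniform linear system with at least one line, with maximum degree Δ ≥ ν₂ − 1, and whose transversal number satisfies τ ≤ ν₂ − 1, where ν₂ is the 2-packing number. Then (r+1)·τ ≤ |P| + |ℒ| (equivalently, τ ≤ (|P| + |ℒ|)/(r+1)). -/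
open Finset

/-!
Let `p` be a point of maximum degree `Δ`, so that `τ ≤ ν₂ - 1 ≤ Δ`. Two lines through `p` share
no other point, so `|P| ≥ 1 + Δ (r - 1)`; and `p` together with one point of every line missing
`p` is a transversal, so `τ + Δ ≤ |ℒ| + 1`. Hence
`(r + 1) τ = (r - 1) τ + 2 τ ≤ (r - 1) Δ + (τ + Δ) ≤ |P| + |ℒ|`.
-/

section

variable {α : Type*} [DecidableEq α] {P : Finset α} {L : Finset (Finset α)}

theorem tau_le_card_of_isTransversal {T : Finset α} (hT : IsTransversal P L T) :
    tau P L ≤ T.card :=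
  Nat.sInf_le ⟨T, hT, rfl⟩

theorem nonempty_of_tau_pos (h : 0 < tau P L) : L.Nonempty := by
  rw [Finset.nonempty_iff_ne_empty]
  rintro rfl
  have : IsTransversal P ∅ ∅ := ⟨Finset.empty_subset P, by simp⟩
  exact h.ne' (Nat.le_zero.1 (tau_le_card_of_isTransversal this))

theorem exists_mem_degree_eq_maxDegree (hP : P.Nonempty) :
    ∃ p ∈ P, degree L p = maxDegree P L := by
  obtain ⟨p, hp, h⟩ := Finset.exists_mem_eq_sup P hP (degree L)
  exact ⟨p, hp, h.symm⟩

theorem tau_add_degree_le_card_add_one (hne : ∀ l ∈ L, l.Nonempty) (hsub : ∀ l ∈ L, l ⊆ P)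
    {p : α} (hp : p ∈ P) : tau P L + degree L p ≤ L.card + 1 := by
  set missing := L.filter (fun l => p ∉ l)
  have : Nonempty α := ⟨p⟩
  choose! pick hpick using hne
  have hT : IsTransversal P L (insert p (missing.image pick)) := by
    refine ⟨Finset.insert_subset hp fun x hx => ?_, fun l hl => ?_⟩
    · obtain ⟨l, hl, rfl⟩ := Finset.mem_image.1 hx
      have hlL := (Finset.mem_filter.1 hl).1
      exact hsub l hlL (hpick l hlL)
    · by_cases hpl : p ∈ l
      · exact ⟨p, Finset.mem_inter.2 ⟨Finset.mem_insert_self _ _, hpl⟩⟩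
      · refine ⟨pick l, Finset.mem_inter.2 ⟨Finset.mem_insert_of_mem ?_, hpick l hl⟩⟩
        exact Finset.mem_image_of_mem pick (Finset.mem_filter.2 ⟨hl, hpl⟩)
  have hsplit : degree L p + missing.card = L.card :=
    Finset.card_filter_add_card_filter_not _
  calc tau P L + degree L p
      ≤ (missing.image pick).card + 1 + degree L p := by
        gcongr; exact (tau_le_card_of_isTransversal hT).trans (Finset.card_insert_le _ _)
    _ ≤ missing.card + 1 + degree L p := by gcongr; exact Finset.card_image_le
    _ = L.card + 1 := by omega

theorem IsLinearSystem.pairwiseDisjoint_erase (hLS : IsLinearSystem P L) (p : α) :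
    ((L.filter fun l => p ∈ l) : Set (Finset α)).PairwiseDisjoint fun l => l.erase p := by
  intro l hl l' hl' hll'
  simp only [Finset.coe_filter, Set.mem_ofPred_eq] at hl hl'
  refine Finset.disjoint_left.2 fun x hx hx' => ?_
  have h2 : 1 < (l ∩ l').card :=
    Finset.one_lt_card.2 ⟨p, Finset.mem_inter.2 ⟨hl.2, hl'.2⟩,
      x, Finset.mem_inter.2 ⟨Finset.mem_of_mem_erase hx, Finset.mem_of_mem_erase hx'⟩,
      (Finset.ne_of_mem_erase hx).symm⟩
  exact absurd (hLS.2.2 l hl.1 l' hl'.1 hll') (not_le.2 h2)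

theorem IsLinearSystem.degree_mul_pred_add_one_le_card (hLS : IsLinearSystem P L) {r : ℕ}
    (huniform : ∀ l ∈ L, l.card = r) {p : α} (hp : p ∈ P) :
    degree L p * (r - 1) + 1 ≤ P.card := by
  set star := L.filter fun l => p ∈ l
  have hcard : (star.biUnion fun l => l.erase p).card = degree L p * (r - 1) := by
    rw [Finset.card_biUnion (hLS.pairwiseDisjoint_erase p), Finset.sum_const_nat fun l hl => ?_]
    · rfl
    · obtain ⟨hlL, hpl⟩ := Finset.mem_filter.1 hl
      rw [Finset.card_erase_of_mem hpl, huniform l hlL]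
  have hsubP : insert p (star.biUnion fun l => l.erase p) ⊆ P := by
    refine Finset.insert_subset hp fun x hx => ?_
    obtain ⟨l, hl, hxl⟩ := Finset.mem_biUnion.1 hx
    exact hLS.2.1 l (Finset.mem_filter.1 hl).1 (Finset.mem_of_mem_erase hxl)
  have hpS : p ∉ star.biUnion fun l => l.erase p := by
    simp only [Finset.mem_biUnion, Finset.notMem_erase, and_false, exists_false,
      not_false_eq_true]
  rw [← hcard, ← Finset.card_insert_of_notMem hpS]
  exact Finset.card_le_card hsubP

end

theorem stmt7_general {α : Type*} [DecidableEq α] (P : Finset α) (L : Finset (Finset α))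
    (r : ℕ) (hLS : IsLinearSystem P L)
    (huniform : ∀ l ∈ L, l.card = r)
    (hΔ : nu2 L - 1 ≤ maxDegree P L) (hτ : tau P L ≤ nu2 L - 1) :
    (r + 1) * tau P L ≤ P.card + L.card := by
  rcases Nat.eq_zero_or_pos (tau P L) with hzero | hpos
  · simp [hzero]
  obtain ⟨l, hl⟩ := nonempty_of_tau_pos hpos
  obtain ⟨s, rfl⟩ : ∃ s, r = s + 1 :=
    Nat.exists_eq_add_one.2 (huniform l hl ▸ (hLS.1 l hl).card_pos)
  obtain ⟨p, hp, hpΔ⟩ :=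
    exists_mem_degree_eq_maxDegree (L := L) ((hLS.1 l hl).mono (hLS.2.1 l hl))
  have hτΔ : tau P L ≤ degree L p := hpΔ ▸ hτ.trans hΔ
  have hPcard := hLS.degree_mul_pred_add_one_le_card huniform hp
  have hLcard := tau_add_degree_le_card_add_one hLS.1 hLS.2.1 hp
  rw [Nat.add_sub_cancel] at hPcard
  calc (s + 1 + 1) * tau P L = tau P L * s + 2 * tau P L := by ring
    _ ≤ degree L p * s + (tau P L + degree L p) := by gcongr; omega
    _ ≤ P.card + L.card := by omega

/-- In an `r`-uniform linear system (`r ≥ 2`) with at least one line,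
`Δ ≥ ν₂ - 1` and `τ ≤ ν₂ - 1`, we have `(r+1)·τ ≤ |P| + |ℒ|`. -/
theorem stmt7 {α : Type*} [DecidableEq α] (P : Finset α) (L : Finset (Finset α))
    (r : ℕ) (hr : 2 ≤ r) (hLS : IsLinearSystem P L)
    (huniform : ∀ l ∈ L, l.card = r) (hL : L.Nonempty)
    (hΔ : nu2 L - 1 ≤ maxDegree P L) (hτ : tau P L ≤ nu2 L - 1) :
    (r + 1) * tau P L ≤ P.card + L.card :=
  stmt7_general P L r hLS huniform hΔ hτ
end

section
/- Let r ≥ 2 and let (P,ℒ) be an r-uniform linear system with 2-packing number ν₂ = 4 and maximum degree Δ = 4. Then (r+1)·τ ≤ |P| + |ℒ| (equivalently, τ ≤ (|P| + |ℒ|)/(r+1)), where τ is the transversal number. -/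
open Finset

/-!
Fix a point `x` of degree 4, let `U` be the union of the four lines through `x`, and let `L'` be
the set of lines missing `x`, so that `τ ≤ τ(L') + 1`. If `τ ≤ 3` the bound follows from
`|P| ≥ |U| = 4(r-1)+1` and `|L| ≥ 4`. Otherwise `τ(L') ≥ 3`, and `ν₂ ≤ 4` shows that for any three
lines `l₁, l₂, l₃` of `L'` some point of `l₁ ∩ l₂` lies in `U ∪ l₃`: if not, two lines through `x`
avoiding `(l₁ ∪ l₂) ∩ l₃` would complete a 2-packing of five lines. Hence `L'` is intersecting,
so `2τ(L') ≤ |L'| + 1` and `τ(L') ≤ r`, and two lines of `L'` can only meet inside `U`. The sets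
`l \ U`, `l ∈ L'`, are therefore disjoint, of size at least `r - 4`, and counting points gives
`|P| ≥ 4(r-1) + 1 + |L'|(r-4)`. This suffices except when `r = τ(L') = 4`; there some line of `L'`
misses a line through `x`, and contributes one more point.
-/

namespace IsLinearSystem

variable {α : Type*} [DecidableEq α] {P : Finset α} {L : Finset (Finset α)}

theorem eq_of_mem_of_mem (hLS : IsLinearSystem P L) {l₁ l₂ : Finset α} (h₁ : l₁ ∈ L)
    (h₂ : l₂ ∈ L) (hne : l₁ ≠ l₂) {p q : α} (hp₁ : p ∈ l₁) (hp₂ : p ∈ l₂) (hq₁ : q ∈ l₁)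
    (hq₂ : q ∈ l₂) : p = q :=
  card_le_one.1 (hLS.2.2 l₁ h₁ l₂ h₂ hne) p (mem_inter.2 ⟨hp₁, hp₂⟩) q (mem_inter.2 ⟨hq₁, hq₂⟩)

theorem mono (hLS : IsLinearSystem P L) {L' : Finset (Finset α)} (h : L' ⊆ L) :
    IsLinearSystem P L' :=
  ⟨fun l hl => hLS.1 l (h hl), fun l hl => hLS.2.1 l (h hl),
    fun l hl l' hl' => hLS.2.2 l (h hl) l' (h hl')⟩

end IsLinearSystem

theorem exists_mem_degree_eq_maxDegree_s11 {α : Type*} [DecidableEq α] {P : Finset α}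
    {L : Finset (Finset α)} (h : maxDegree P L ≠ 0) : ∃ x ∈ P, degree L x = maxDegree P L := by
  obtain ⟨x, hxP, hx⟩ := exists_mem_eq_sup P
    (nonempty_iff_ne_empty.2 fun hP => h (by simp [maxDegree, hP])) (degree L)
  exact ⟨x, hxP, hx.symm⟩

section Transversal

variable {α : Type*} [DecidableEq α] {P : Finset α} {L M : Finset (Finset α)} {T : Finset α}

theorem IsTransversal.tau_le (hT : IsTransversal P L T) : tau P L ≤ #T :=
  Nat.sInf_le ⟨T, hT, rfl⟩

theorem IsTransversal.insert {M' : Finset (Finset α)} (hT : IsTransversal P M' T) {p : α}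
    (hp : p ∈ P) (h : ∀ l ∈ M, l ∉ M' → p ∈ l) : IsTransversal P M (insert p T) := by
  refine ⟨insert_subset hp hT.1, fun l hl => ?_⟩
  by_cases hlM' : l ∈ M'
  · exact (hT.2 l hlM').mono (inter_subset_inter_right (subset_insert p T))
  · exact ⟨p, mem_inter.2 ⟨mem_insert_self p T, h l hl hlM'⟩⟩

theorem exists_isTransversal_card_le (hne : ∀ l ∈ L, l.Nonempty) (hP : ∀ l ∈ L, l ⊆ P) :
    ∃ T, IsTransversal P L T ∧ #T ≤ #L := by
  choose f hf using hne
  refine ⟨L.attach.image fun l => f l.1 l.2, ⟨?_, fun l hl => ?_⟩,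
    card_image_le.trans_eq card_attach⟩
  · simp only [image_subset_iff, mem_attach, forall_const, Subtype.forall]
    exact fun l hl => hP l hl (hf l hl)
  · exact ⟨f l hl, mem_inter.2 ⟨mem_image.2 ⟨⟨l, hl⟩, mem_attach _ _, rfl⟩, hf l hl⟩⟩

theorem exists_isTransversal_card_eq_tau (hne : ∀ l ∈ L, l.Nonempty) (hP : ∀ l ∈ L, l ⊆ P) :
    ∃ T, IsTransversal P L T ∧ #T = tau P L :=
  let ⟨T, hT, _⟩ := exists_isTransversal_card_le hne hP
  Nat.sInf_mem (s := {n | ∃ T, IsTransversal P L T ∧ #T = n}) ⟨#T, T, hT, rfl⟩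

theorem tau_le_card_s11 (hLS : IsLinearSystem P L) : tau P L ≤ #L :=
  let ⟨_, hT, hTL⟩ := exists_isTransversal_card_le hLS.1 hLS.2.1
  hT.tau_le.trans hTL

theorem tau_le_tau_filter_not_mem_add_one (hLS : IsLinearSystem P L) {x : α} (hx : x ∈ P) :
    tau P L ≤ tau P {l ∈ L | x ∉ l} + 1 := by
  obtain ⟨T, hT, hTcard⟩ := exists_isTransversal_card_eq_tau (P := P) (L := {l ∈ L | x ∉ l})
    (fun l hl => hLS.1 l (mem_filter.1 hl).1) (fun l hl => hLS.2.1 l (mem_filter.1 hl).1)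
  have hT' : IsTransversal P L (insert x T) :=
    hT.insert hx fun l hl hl' => by simpa [hl] using hl'
  exact hT'.tau_le.trans (hTcard ▸ card_insert_le x T)

theorem exists_isTransversal_two_mul_card_le (hP : ∀ l ∈ M, l ⊆ P)
    (hM : ∀ l ∈ M, ∀ l' ∈ M, (l ∩ l').Nonempty) :
    ∃ T, IsTransversal P M T ∧ 2 * #T ≤ #M + 1 := by
  induction M using Finset.strongInduction with
  | H M ih =>
  rcases Nat.lt_or_ge 1 #M with hM2 | hM1
  · obtain ⟨l₁, hl₁, l₂, hl₂, hne⟩ := one_lt_card.1 hM2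
    obtain ⟨p, hp⟩ := hM l₁ hl₁ l₂ hl₂
    have hsub : {l₁, l₂} ⊆ M := insert_subset hl₁ (singleton_subset_iff.2 hl₂)
    obtain ⟨T, hT, hTcard⟩ := ih (M \ {l₁, l₂}) (sdiff_ssubset hsub (insert_nonempty _ _))
      (fun l hl => hP l (mem_sdiff.1 hl).1)
      (fun l hl l' hl' => hM l (mem_sdiff.1 hl).1 l' (mem_sdiff.1 hl').1)
    refine ⟨insert p T, hT.insert (hP l₁ hl₁ (mem_inter.1 hp).1) fun l hl hl' => ?_, ?_⟩
    · obtain rfl | rfl : l = l₁ ∨ l = l₂ := by simpa [hl, or_iff_not_imp_left] using hl'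
      exacts [(mem_inter.1 hp).1, (mem_inter.1 hp).2]
    · have := card_insert_le p T
      have := card_sdiff_of_subset hsub
      have := card_pair hne
      omega
  · obtain ⟨T, hT, hTcard⟩ := exists_isTransversal_card_le
      (fun l hl => by simpa using hM l hl l hl) hP
    exact ⟨T, hT, by omega⟩

end Transversal

section Packing

variable {α : Type*} [DecidableEq α] {L R : Finset (Finset α)}

theorem Is2Packing.card_le_nu2 (hR : Is2Packing L R) : #R ≤ nu2 L :=
  le_csSup ⟨#L, by rintro n ⟨R', hR', rfl⟩; exact card_le_card hR'.1⟩ ⟨R, hR, rfl⟩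

theorem is2Packing_of_card_filter_mem_le_two (hRL : R ⊆ L)
    (h : ∀ p, #{l ∈ R | p ∈ l} ≤ 2) : Is2Packing L R := by
  refine ⟨hRL, fun l₁ h₁ l₂ h₂ l₃ h₃ h12 h13 h23 => ?_⟩
  by_contra hne
  obtain ⟨p, hp⟩ := nonempty_iff_ne_empty.2 hne
  simp only [mem_inter] at hp
  have hsub : {l₁, l₂, l₃} ⊆ {l ∈ R | p ∈ l} := by
    simp only [insert_subset_iff, singleton_subset_iff, mem_filter]
    exact ⟨⟨h₁, hp.1.1⟩, ⟨h₂, hp.1.2⟩, ⟨h₃, hp.2⟩⟩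
  have := card_le_card hsub
  rw [card_insert_of_notMem (by simp [h12, h13]), card_pair h23] at this
  exact absurd (this.trans (h p)) (by norm_num)

end Packing

namespace IsLinearSystem

variable {α : Type*} [DecidableEq α] {P : Finset α} {L : Finset (Finset α)} {r : ℕ} {x : α}

theorem card_biUnion_filter_mem (hLS : IsLinearSystem P L) (huniform : ∀ l ∈ L, #l = r)
    (hx : 0 < degree L x) : #({l ∈ L | x ∈ l}.biUnion id) = degree L x * (r - 1) + 1 := by
  obtain ⟨a₀, ha₀⟩ := card_pos.1 hx
  have hunion : {l ∈ L | x ∈ l}.biUnion id = insert x ({l ∈ L | x ∈ l}.biUnion (·.erase x)) := by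
    ext q
    simp only [mem_biUnion, mem_insert, mem_erase, id, mem_filter]
    by_cases hq : q = x
    · exact ⟨fun _ => Or.inl hq, fun _ => ⟨a₀, mem_filter.1 ha₀, hq ▸ (mem_filter.1 ha₀).2⟩⟩
    · simp [hq]
  rw [hunion, card_insert_of_notMem (by simp), card_biUnion, sum_congr rfl, sum_const, smul_eq_mul,
    degree]
  · intro a ha
    rw [card_erase_of_mem (mem_filter.1 ha).2, huniform a (mem_filter.1 ha).1]
  · intro a ha b hb hab
    refine disjoint_left.2 fun q hqa hqb => (mem_erase.1 hqa).1 ?_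
    exact hLS.eq_of_mem_of_mem (mem_filter.1 ha).1 (mem_filter.1 hb).1 hab
      (mem_erase.1 hqa).2 (mem_erase.1 hqb).2 (mem_filter.1 ha).2 (mem_filter.1 hb).2

theorem card_filter_not_disjoint_le (hLS : IsLinearSystem P L) {s : Finset α} (hxs : x ∉ s) :
    #{a ∈ {l ∈ L | x ∈ l} | ¬Disjoint s a} ≤ #s := by
  refine card_le_card_of_forall_subsingleton (fun a q => q ∈ a) (fun a ha => ?_) ?_
  · obtain ⟨q, hqs, hqa⟩ := not_disjoint_iff.1 (mem_filter.1 ha).2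
    exact ⟨q, hqs, hqa⟩
  · intro q hq a ha b hb
    simp only [Set.mem_ofPred_eq, mem_filter] at ha hb
    by_contra hab
    exact hxs (hLS.eq_of_mem_of_mem ha.1.1.1 hb.1.1.1 hab ha.2 hb.2 ha.1.1.2 hb.1.1.2 ▸ hq)

theorem card_inter_biUnion_filter_mem_le (hLS : IsLinearSystem P L) {l : Finset α}
    (hl : l ∈ L) (hxl : x ∉ l) :
    #(l ∩ {l ∈ L | x ∈ l}.biUnion id) ≤ #{a ∈ {l ∈ L | x ∈ l} | ¬Disjoint l a} := by
  refine card_le_card_of_forall_subsingleton (fun q a => q ∈ a) (fun q hq => ?_) ?_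
  · obtain ⟨hql, a, ha, hqa⟩ := by simpa only [mem_inter, mem_biUnion, id] using hq
    exact ⟨a, mem_filter.2 ⟨ha, not_disjoint_iff.2 ⟨q, hql, hqa⟩⟩, hqa⟩
  · intro a ha p hp q hq
    simp only [Set.mem_ofPred_eq, mem_inter, mem_filter] at ha hp hq
    have hla : l ≠ a := fun h => hxl (h ▸ ha.1.2)
    exact hLS.eq_of_mem_of_mem hl ha.1.1 hla hp.1.1 hp.2 hq.1.1 hq.2

theorem sub_card_filter_not_disjoint_le_card_sdiff (hLS : IsLinearSystem P L)
    (huniform : ∀ l ∈ L, #l = r) {l : Finset α} (hl : l ∈ L) (hxl : x ∉ l) :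
    r - #{a ∈ {l ∈ L | x ∈ l} | ¬Disjoint l a} ≤ #(l \ {l ∈ L | x ∈ l}.biUnion id) := by
  have := hLS.card_inter_biUnion_filter_mem_le hl hxl
  have := card_sdiff_add_card_inter l ({l ∈ L | x ∈ l}.biUnion id)
  rw [huniform l hl] at this
  omega

theorem exists_disjoint_of_le_tau (hLS : IsLinearSystem P L) (huniform : ∀ l ∈ L, #l = r)
    {a : Finset α} (ha : a ∈ L) (hxa : x ∈ a) (hr : r ≤ tau P {l ∈ L | x ∉ l}) :
    ∃ l ∈ {l ∈ L | x ∉ l}, Disjoint l a := by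
  by_contra! h
  have hT : IsTransversal P {l ∈ L | x ∉ l} (a.erase x) := by
    refine ⟨(erase_subset x a).trans (hLS.2.1 a ha), fun l hl => ?_⟩
    obtain ⟨q, hql, hqa⟩ := not_disjoint_iff.1 (h l hl)
    have hqx : q ≠ x := fun hqx => (mem_filter.1 hl).2 (hqx ▸ hql)
    exact ⟨q, mem_inter.2 ⟨mem_erase.2 ⟨hqx, hqa⟩, hql⟩⟩
  have := hT.tau_le
  have := card_pos.2 ⟨x, hxa⟩
  rw [card_erase_of_mem hxa, huniform a ha] at *
  omega

theorem exists_card_sdiff_ge_of_le_tau (hLS : IsLinearSystem P L) (huniform : ∀ l ∈ L, #l = r)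
    (hx : 0 < degree L x) (hr : r ≤ tau P {l ∈ L | x ∉ l}) :
    ∃ l ∈ {l ∈ L | x ∉ l}, r + 1 - degree L x ≤ #(l \ {l ∈ L | x ∈ l}.biUnion id) := by
  obtain ⟨a, ha⟩ := card_pos.1 hx
  obtain ⟨l, hl, hla⟩ := hLS.exists_disjoint_of_le_tau huniform (mem_filter.1 ha).1
    (mem_filter.1 ha).2 hr
  have hsub : {b ∈ {l ∈ L | x ∈ l} | ¬Disjoint l b} ⊆ {l ∈ L | x ∈ l}.erase a :=
    fun b hb => mem_erase.2 ⟨fun hba => (mem_filter.1 hb).2 (hba ▸ hla), (mem_filter.1 hb).1⟩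
  have hcard := card_le_card hsub
  rw [card_erase_of_mem ha, ← degree] at hcard
  have := hLS.sub_card_filter_not_disjoint_le_card_sdiff huniform (mem_filter.1 hl).1
    (mem_filter.1 hl).2
  exact ⟨l, hl, by omega⟩

theorem exists_mem_inter_of_nu2_le_four (hLS : IsLinearSystem P L) (hν : nu2 L ≤ 4)
    (hx : 4 ≤ degree L x) {l₁ l₂ l₃ : Finset α} (h₁ : l₁ ∈ L) (h₂ : l₂ ∈ L) (h₃ : l₃ ∈ L)
    (hx₁ : x ∉ l₁) (hx₂ : x ∉ l₂) (hx₃ : x ∉ l₃) (h12 : l₁ ≠ l₂) (h13 : l₁ ≠ l₃)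
    (h23 : l₂ ≠ l₃) :
    ∃ p ∈ l₁ ∩ l₂, p ∈ {l ∈ L | x ∈ l}.biUnion id ∨ p ∈ l₃ := by
  by_contra! h
  set s := (l₁ ∪ l₂) ∩ l₃
  have hs : #s ≤ 2 := by
    rw [show s = l₁ ∩ l₃ ∪ l₂ ∩ l₃ from union_inter_distrib_right ..]
    exact (card_union_le _ _).trans (add_le_add (hLS.2.2 _ h₁ _ h₃ h13) (hLS.2.2 _ h₂ _ h₃ h23))
  have hgood : 1 < #{a ∈ {l ∈ L | x ∈ l} | Disjoint s a} := by
    have := card_filter_add_card_filter_not (s := {l ∈ L | x ∈ l}) (Disjoint s ·)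
    have := hLS.card_filter_not_disjoint_le (x := x) (s := s) (by simp [s, hx₃])
    rw [degree] at hx
    omega
  obtain ⟨a, ha, b, hb, hab⟩ := one_lt_card.1 hgood
  simp only [mem_filter] at ha hb
  have hxl : ∀ {l}, x ∉ l → a ≠ l ∧ b ≠ l := fun hl =>
    ⟨fun h => hl (h ▸ ha.1.2), fun h => hl (h ▸ hb.1.2)⟩
  have hR : Is2Packing L {a, b, l₁, l₂, l₃} := by
    refine is2Packing_of_card_filter_mem_le_two ?_ fun p => ?_
    · simp only [insert_subset_iff, singleton_subset_iff]
      exact ⟨ha.1.1, hb.1.1, h₁, h₂, h₃⟩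
    have hpab : p ∈ a → p ∈ b → p = x := fun hpa hpb =>
      hLS.eq_of_mem_of_mem ha.1.1 hb.1.1 hab hpa hpb ha.1.2 hb.1.2
    have hp₁₂ : p ∈ l₁ → p ∈ l₂ → p ∉ a ∧ p ∉ b ∧ p ∉ l₃ := fun hp₁ hp₂ => by
      obtain ⟨hU, hp₃⟩ := h p (mem_inter.2 ⟨hp₁, hp₂⟩)
      simp only [mem_biUnion, id, mem_filter, not_exists, not_and] at hU
      exact ⟨hU a ha.1, hU b hb.1, hp₃⟩
    have hp₃ : p ∈ l₃ → p ∈ l₁ ∨ p ∈ l₂ → p ∉ a ∧ p ∉ b := fun hp hp' =>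
      have hps : p ∈ s := mem_inter.2 ⟨mem_union.2 hp', hp⟩
      ⟨disjoint_left.1 ha.2 hps, disjoint_left.1 hb.2 hps⟩
    rw [card_filter, sum_insert, sum_insert, sum_insert, sum_pair h23]
    · by_cases hpx : p = x
      · subst hpx
        simp only [hx₁, hx₂, hx₃, if_false]
        split_ifs <;> omega
      · split_ifs <;> simp_all
    all_goals simp [h12, h13, hab, hxl hx₁, hxl hx₂, hxl hx₃]
  have hcard : #({a, b, l₁, l₂, l₃} : Finset (Finset α)) = 5 := by
    rw [card_insert_of_notMem, card_insert_of_notMem, card_insert_of_notMem, card_pair h23]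
    all_goals simp [h12, h13, hab, hxl hx₁, hxl hx₂, hxl hx₃]
  have := hR.card_le_nu2
  omega

theorem inter_nonempty_of_three_le_card (hLS : IsLinearSystem P L) (hν : nu2 L ≤ 4)
    (hx : 4 ≤ degree L x) (h3 : 3 ≤ #{l ∈ L | x ∉ l}) {l₁ l₂ : Finset α}
    (h₁ : l₁ ∈ {l ∈ L | x ∉ l}) (h₂ : l₂ ∈ {l ∈ L | x ∉ l}) : (l₁ ∩ l₂).Nonempty := by
  by_cases h12 : l₁ = l₂
  · simpa [h12] using hLS.1 l₂ (mem_filter.1 h₂).1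
  obtain ⟨l₃, hl₃⟩ : ({l ∈ L | x ∉ l} \ {l₁, l₂}).Nonempty := by
    rw [← card_pos]
    have := le_card_sdiff {l₁, l₂} {l ∈ L | x ∉ l}
    have := card_pair h12
    omega
  simp only [mem_sdiff, mem_insert, mem_singleton, not_or] at hl₃
  simp only [mem_filter] at h₁ h₂ hl₃
  obtain ⟨p, hp, -⟩ := hLS.exists_mem_inter_of_nu2_le_four hν hx h₁.1 h₂.1 hl₃.1.1 h₁.2 h₂.2
    hl₃.1.2 h12 (Ne.symm hl₃.2.1) (Ne.symm hl₃.2.2)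
  exact ⟨p, hp⟩

theorem mem_biUnion_of_mem_of_mem (hLS : IsLinearSystem P L) (hν : nu2 L ≤ 4)
    (hx : 4 ≤ degree L x) (ht : 1 < tau P {l ∈ L | x ∉ l}) {l₁ l₂ : Finset α}
    (h₁ : l₁ ∈ {l ∈ L | x ∉ l}) (h₂ : l₂ ∈ {l ∈ L | x ∉ l}) (h12 : l₁ ≠ l₂) {y : α}
    (hy₁ : y ∈ l₁) (hy₂ : y ∈ l₂) : y ∈ {l ∈ L | x ∈ l}.biUnion id := by
  by_contra hy
  simp only [mem_filter] at h₁ h₂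
  have hT : IsTransversal P {l ∈ L | x ∉ l} {y} := by
    refine ⟨singleton_subset_iff.2 (hLS.2.1 l₁ h₁.1 hy₁), fun l₃ h₃ => ?_⟩
    refine ⟨y, mem_inter.2 ⟨mem_singleton_self y, ?_⟩⟩
    by_cases h13 : l₁ = l₃
    · exact h13 ▸ hy₁
    by_cases h23 : l₂ = l₃
    · exact h23 ▸ hy₂
    obtain ⟨p, hp, hpU | hp₃⟩ := hLS.exists_mem_inter_of_nu2_le_four hν hx h₁.1 h₂.1
      (mem_filter.1 h₃).1 h₁.2 h₂.2 (mem_filter.1 h₃).2 h12 h13 h23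
    all_goals
      obtain rfl : p = y := hLS.eq_of_mem_of_mem h₁.1 h₂.1 h12 (mem_inter.1 hp).1
        (mem_inter.1 hp).2 hy₁ hy₂
    exacts [absurd hpU hy, hp₃]
  have := hT.tau_le
  rw [card_singleton] at this
  omega

theorem card_biUnion_add_sum_card_sdiff_le (hLS : IsLinearSystem P L) (hν : nu2 L ≤ 4)
    (hx : 4 ≤ degree L x) (ht : 1 < tau P {l ∈ L | x ∉ l}) :
    #({l ∈ L | x ∈ l}.biUnion id) +
      ∑ l ∈ {l ∈ L | x ∉ l}, #(l \ {l ∈ L | x ∈ l}.biUnion id) ≤ #P := by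
  set U := {l ∈ L | x ∈ l}.biUnion id
  have hdisj : (({l ∈ L | x ∉ l} : Finset (Finset α)) : Set (Finset α)).PairwiseDisjoint (· \ U) :=
    fun l₁ h₁ l₂ h₂ h12 => disjoint_left.2 fun y hy₁ hy₂ => (mem_sdiff.1 hy₁).2 <|
      hLS.mem_biUnion_of_mem_of_mem hν hx ht (mem_coe.1 h₁) (mem_coe.1 h₂) h12
        (mem_sdiff.1 hy₁).1 (mem_sdiff.1 hy₂).1
  rw [← card_biUnion hdisj, ← card_union_of_disjoint]
  · refine card_le_card (union_subset ?_ ?_) <;>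
      simp only [biUnion_subset_iff_forall_subset, mem_filter, U]
    · exact fun l hl => hLS.2.1 l hl.1
    · exact fun l hl => sdiff_subset.trans (hLS.2.1 l hl.1)
  · exact disjoint_biUnion_right _ _ _ |>.2 fun _ _ => disjoint_sdiff

theorem succ_mul_tau_le_of_four_le_tau (hLS : IsLinearSystem P L) (huniform : ∀ l ∈ L, #l = r)
    (hν : nu2 L ≤ 4) (hxP : x ∈ P) (hx : degree L x = 4) (ht : 4 ≤ tau P L) :
    (r + 1) * tau P L ≤ #P + #L := by
  set L' := {l ∈ L | x ∉ l}
  set t' := tau P L'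
  set S := ∑ l ∈ L', #(l \ {l ∈ L | x ∈ l}.biUnion id)
  have hLL' : #L = 4 + #L' := hx ▸ (card_filter_add_card_filter_not (s := L) (x ∈ ·)).symm
  have htt' : tau P L ≤ t' + 1 := tau_le_tau_filter_not_mem_add_one hLS hxP
  have hL' : 3 ≤ #L' := by
    have : t' ≤ #L' := tau_le_card_s11 (hLS.mono (filter_subset _ L))
    omega
  have hinter : ∀ l ∈ L', ∀ l' ∈ L', (l ∩ l').Nonempty := fun l hl l' hl' =>
    hLS.inter_nonempty_of_three_le_card hν hx.ge hL' hl hl'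
  have h2t' : 2 * t' ≤ #L' + 1 := by
    obtain ⟨T, hT, hTcard⟩ : ∃ T, IsTransversal P L' T ∧ 2 * #T ≤ #L' + 1 :=
      exists_isTransversal_two_mul_card_le (fun l hl => hLS.2.1 l (mem_filter.1 hl).1) hinter
    have : t' ≤ #T := hT.tau_le
    omega
  have ht'r : t' ≤ r := by
    obtain ⟨l₀, hl₀⟩ := card_pos.1 (by omega : 0 < #L')
    have hT : IsTransversal P L' l₀ := ⟨hLS.2.1 l₀ (mem_filter.1 hl₀).1, hinter l₀ hl₀⟩
    exact huniform l₀ (mem_filter.1 hl₀).1 ▸ hT.tau_le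
  have hP : (4 * (r - 1) + 1) + S ≤ #P := by
    have := hLS.card_biUnion_add_sum_card_sdiff_le hν hx.ge (show 1 < t' by omega)
    rwa [hLS.card_biUnion_filter_mem huniform (by omega), hx] at this
  have hS : #L' * (r - 4) ≤ S := by
    rw [← smul_eq_mul]
    refine card_nsmul_le_sum _ _ _ fun l hl => ?_
    have := hLS.sub_card_filter_not_disjoint_le_card_sdiff huniform (mem_filter.1 hl).1
      (mem_filter.1 hl).2
    have := card_filter_le {l ∈ L | x ∈ l} (¬Disjoint l ·)
    rw [← degree, hx] at this
    omega
  have hS' : r ≤ t' → r + 1 - 4 ≤ S := fun hr =>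
    let ⟨l, hl, hlS⟩ := hx ▸ hLS.exists_card_sdiff_ge_of_le_tau huniform (by omega) hr
    hlS.trans (single_le_sum (f := fun l => #(l \ {l ∈ L | x ∈ l}.biUnion id))
      (fun _ _ => Nat.zero_le _) hl)
  rcases Nat.lt_or_ge r 5 with hr | hr
  · interval_cases r <;> omega
  · obtain ⟨q, rfl⟩ : ∃ q, r = q + 5 := ⟨r - 5, by omega⟩
    have hS5 : #L' * (q + 1) ≤ S := by simpa using hS
    have hP5 : 4 * q + 17 + S ≤ #P := by omega
    have h1 : (q + 6) * tau P L ≤ (q + 6) * (t' + 1) := Nat.mul_le_mul_left _ htt'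
    have h2 : (q + 2) * (2 * t') ≤ (q + 2) * (#L' + 1) := Nat.mul_le_mul_left _ h2t'
    nlinarith [Nat.zero_le (q * t')]

end IsLinearSystem

/-- Any `r`-uniform linear system (`r ≥ 2`) with `ν₂ = 4` and `Δ = 4`
satisfies `(r+1)·τ ≤ |P| + |ℒ|`. -/
theorem stmt11 {α : Type*} [DecidableEq α] (P : Finset α) (L : Finset (Finset α))
    (r : ℕ) (hr : 2 ≤ r) (hLS : IsLinearSystem P L)
    (huniform : ∀ l ∈ L, l.card = r) (hν : nu2 L = 4) (hΔ : maxDegree P L = 4) :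
    (r + 1) * tau P L ≤ P.card + L.card := by
  obtain ⟨x, hxP, hx⟩ := exists_mem_degree_eq_maxDegree_s11 (hΔ ▸ four_ne_zero)
  rw [hΔ] at hx
  rcases Nat.lt_or_ge (tau P L) 4 with ht | ht
  · have hP : 4 * (r - 1) + 1 ≤ #P := by
      rw [← hx, ← hLS.card_biUnion_filter_mem huniform (by omega)]
      exact card_le_card (biUnion_subset.2 fun l hl => hLS.2.1 l (mem_filter.1 hl).1)
    have hL : 4 ≤ #L := hx ▸ card_filter_le L _
    calc (r + 1) * tau P L ≤ (r + 1) * 3 := Nat.mul_le_mul_left _ (by omega)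
      _ ≤ #P + #L := by omega
  · exact hLS.succ_mul_tau_le_of_four_le_tau huniform hν.le hxP hx ht
end
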